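/- Fix an integer g ≥ 1. There exists a family of polynomials P_{m,k} in 2g+1 variables over ℂ, indexed by m ≥ g and k ≥ −g, depending only on (g,m,k) and not on the chain, such that every genus-g chain satisfies H^{2m+1}_{2k+1} = P_{m,k}(H^{2g+1}_{1−2g}, H^{2g+1}_{3−2g}, …, H^{2g+1}_{2g+1}) for all m ≥ g and k ≥ −g. In other words, a genus-g chain is completely determined by the 2g+1 values H^{2g+1}_{1−2g}, …, H^{2g+1}_{2g+1} through universal polynomial formulas (the subvariety W_{gc} has dimension 2g+1). -/

import Mathlib

/-!
(Cg1) for `n = j - 2g` expresses `2 H 0 j` as minus a quadratic expression in `H 0 0, …, H 0 (j-1)`,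
so, as `2` is invertible, the first row is determined recursively by its first `2g+1` entries;
(Cg2) then computes row `a+1` from row `a` and the first row.
-/

/-- Genus-g chain (stratum Σ_{2g} of Gr^(2)): `H a b` represents
`H^{2(a+g)+1}_{2(b−g)+1}`, i.e. row index `2m+1` with `m = a+g ≥ g` and column
index `2k+1` with `k = b−g ≥ −g`.
(Cg1) says `p_{2g+1}² = λ^{2g+1} + ∑_{j=0}^{2g} u_j λ^j` (hyperelliptic curve
condition): for `n ≥ 1`, `2H^{2g+1}_{2(g+n)+1} + ∑_{k=−g}^{n−1+g}
H^{2g+1}_{2k+1}·H^{2g+1}_{2(n−1−k)+1} = 0`.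
(Cg2) says `p_{2m+3} = λ·p_{2m+1} − H^{2m+1}_{1−2g}·p_{2g+1}`:
`H^{2m+3}_{2k+1} = H^{2m+1}_{2k+3} − H^{2m+1}_{1−2g}·H^{2g+1}_{2k+1}`. -/
def GenusChain (g : ℕ) (H : ℕ → ℕ → ℂ) : Prop :=
  (∀ n : ℕ, 1 ≤ n →
    2 * H 0 (2 * g + n)
      + ∑ i ∈ Finset.range (n + 2 * g), H 0 i * H 0 (n - 1 + 2 * g - i) = 0) ∧
  (∀ a b : ℕ, H (a + 1) b = H a (b + 1) - H a 0 * H 0 b)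

open MvPolynomial

namespace GenusChain

variable {g : ℕ} {H : ℕ → ℕ → ℂ}

noncomputable def firstRowPoly (g : ℕ) : ℕ → MvPolynomial (Fin (2 * g + 1)) ℂ
  | n =>
    if h : n ≤ 2 * g then X ⟨n, by omega⟩
    else -C (2⁻¹ : ℂ) * ∑ i : Fin n, firstRowPoly g i * firstRowPoly g (n - 1 - i)
  decreasing_by all_goals omega

noncomputable def chainPoly (g : ℕ) : ℕ → ℕ → MvPolynomial (Fin (2 * g + 1)) ℂ
  | 0, b => firstRowPoly g b
  | a + 1, b => chainPoly g a (b + 1) - chainPoly g a 0 * firstRowPoly g b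

theorem first_row_eq (hH : GenusChain g H) {n : ℕ} (hn : 2 * g < n) :
    H 0 n = -2⁻¹ * ∑ i ∈ Finset.range n, H 0 i * H 0 (n - 1 - i) := by
  have key := hH.1 (n - 2 * g) (by omega)
  rw [show 2 * g + (n - 2 * g) = n by omega, show n - 2 * g + 2 * g = n by omega,
    show n - 2 * g - 1 + 2 * g = n - 1 by omega] at key
  linear_combination 2⁻¹ * key

theorem eval_firstRowPoly (hH : GenusChain g H) (n : ℕ) :
    eval (fun i : Fin (2 * g + 1) => H 0 i) (firstRowPoly g n) = H 0 n := by
  induction n using Nat.strong_induction_on with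
  | _ n ih =>
    rw [firstRowPoly]
    split_ifs with hn
    · simp
    · rw [hH.first_row_eq (by omega),
        ← Fin.sum_univ_eq_sum_range (fun i => H 0 i * H 0 (n - 1 - i))]
      simp only [map_mul, map_neg, map_sum, eval_C]
      refine congrArg _ (Finset.sum_congr rfl fun i _ => ?_)
      rw [ih i i.2, ih (n - 1 - i) (by omega)]

theorem eval_chainPoly (hH : GenusChain g H) (a b : ℕ) :
    eval (fun i : Fin (2 * g + 1) => H 0 i) (chainPoly g a b) = H a b := by
  induction a generalizing b with
  | zero => exact hH.eval_firstRowPoly b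
  | succ a ih => simp only [chainPoly, map_sub, map_mul, ih, hH.eval_firstRowPoly, hH.2]

end GenusChain

theorem genusChain_dimension_general (g : ℕ) :
    ∃ P : ℕ → ℕ → MvPolynomial (Fin (2 * g + 1)) ℂ,
      ∀ H : ℕ → ℕ → ℂ, GenusChain g H →
        ∀ a b : ℕ, H a b = MvPolynomial.eval (fun i : Fin (2 * g + 1) => H 0 (i : ℕ)) (P a b) :=
  ⟨GenusChain.chainPoly g, fun _ hH a b => (hH.eval_chainPoly a b).symm⟩

/-- A genus-g chain is completely determined by the `2g+1` values
`H^{2g+1}_{1−2g}, …, H^{2g+1}_{2g+1}` (i.e. `H 0 0, …, H 0 (2g)`) through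
universal polynomial formulas: the subvariety `W_{gc}` has dimension `2g+1`. -/
theorem genusChain_dimension (g : ℕ) (hg : 1 ≤ g) :
    ∃ P : ℕ → ℕ → MvPolynomial (Fin (2 * g + 1)) ℂ,
      ∀ H : ℕ → ℕ → ℂ, GenusChain g H →
        ∀ a b : ℕ, H a b = MvPolynomial.eval (fun i : Fin (2 * g + 1) => H 0 (i : ℕ)) (P a b) :=
  genusChain_dimension_general g
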